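/- Assume Q has a unique source s, condition (b) holds, and the vertex n-1 = s. Then τ^{-r} induces a bijection (indeed quiver isomorphism) from lk_p(P(s)) to lk_p(τ^{-r}P(s)); combinatorially, (r_i) ↦ (r_i + r) is an isomorphism of posets from {(r_i) ∈ L(Q) : r_s = 0} onto {(r_i) ∈ L(Q) : r_s = r}. -/

import Mathlib

/-! Combinatorics of quivers: walks in the double quiver, the function `l_Q`,
paths, acyclicity, condition (b), unique sources, and the set `L(Q)`.
A quiver on a vertex type `V` is encoded by its family of arrow types
`H : V → V → Type`. -/

/-- Walks in the double quiver `Q̃` of the quiver `Q` encoded by `H`: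
a step may traverse an arrow forwards (`fwd`) or backwards (`bwd`). -/
inductive DWalk {V : Type} (H : V → V → Type) : V → V → Type where
  | nil : (a : V) → DWalk H a a
  | fwd : {a b c : V} → DWalk H a b → H b c → DWalk H a c
  | bwd : {a b c : V} → DWalk H a b → H c b → DWalk H a c

/-- `c⁺(w)`: the number of forward (original) arrows used by a walk in `Q̃`. -/
def DWalk.cplus {V : Type} {H : V → V → Type} : {a b : V} → DWalk H a b → ℕ
  | _, _, .nil _ => 0
  | _, _, .fwd w _ => DWalk.cplus w + 1
  | _, _, .bwd w _ => DWalk.cplus w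

/-- `l_Q(i,j)`: the minimal number of forward arrows over all walks from `i`
to `j` in the double quiver `Q̃`.  (In particular `l_Q(i,i) = 0`.) -/
noncomputable def ell {V : Type} (H : V → V → Type) (i j : V) : ℕ :=
  sInf {m | ∃ w : DWalk H i j, DWalk.cplus w = m}

/-- Directed paths in the quiver `Q` itself. -/
inductive QPath {V : Type} (H : V → V → Type) : V → V → Type where
  | nil : (a : V) → QPath H a a
  | cons : {a b c : V} → QPath H a b → H b c → QPath H a c

def QPath.length {V : Type} {H : V → V → Type} : {a b : V} → QPath H a b → ℕ
  | _, _, .nil _ => 0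
  | _, _, .cons p _ => QPath.length p + 1

/-- `Q` has no loops and no (nontrivial, directed) cycles. -/
def QuiverAcyclic {V : Type} (H : V → V → Type) : Prop :=
  ∀ (a : V) (p : QPath H a a), QPath.length p = 0

/-- `Q` is connected (any two vertices are joined by a walk in `Q̃`). -/
def QuiverConnected {V : Type} (H : V → V → Type) : Prop :=
  ∀ a b : V, Nonempty (DWalk H a b)

/-- Condition (b): for every vertex `x`, `#s(x) + #t(x) > 1`. -/
def CondB {V : Type} (H : V → V → Type) [Fintype V] [∀ a b, Fintype (H a b)] : Prop :=
  ∀ x : V, 1 < ∑ y : V, (Fintype.card (H x y) + Fintype.card (H y x))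

/-- `s` is the unique source (vertex with no incoming arrows) of `Q`. -/
def UniqueSource {V : Type} (H : V → V → Type) (s : V) : Prop :=
  (∀ y : V, IsEmpty (H y s)) ∧ ∀ t : V, (∀ y : V, IsEmpty (H y t)) → t = s

/-- The set `L(Q) = {(r_i) ∈ ℤ_{≥0}^{Q₀} ∣ r_j ≤ r_i + l_Q(i,j) for all i,j}`. -/
def LSet {V : Type} (H : V → V → Type) : Set (V → ℕ) :=
  {r | ∀ i j : V, r j ≤ r i + ell H i j}

/-! Since every vertex other than the unique source `s` has an incoming arrow and `Q` is finite
and acyclic, following incoming arrows backwards from any vertex `i` reaches `s` without using a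
single forward arrow. Hence `l_Q(i, s) = 0`, so every `r ∈ L(Q)` satisfies `r s ≤ r i`. The
defining inequalities of `L(Q)` are invariant under adding a constant to all coordinates, and so
also under subtracting a constant that is at most `r s`; these two shifts are mutually inverse. -/

namespace DWalk

variable {V : Type} {H : V → V → Type}

def append : {a b c : V} → DWalk H a b → DWalk H b c → DWalk H a c
  | _, _, _, w, .nil _ => w
  | _, _, _, w, .fwd w' e => .fwd (w.append w') e
  | _, _, _, w, .bwd w' e => .bwd (w.append w') e

theorem cplus_append {a b c : V} (w : DWalk H a b) (w' : DWalk H b c) :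
    (w.append w').cplus = w.cplus + w'.cplus := by
  induction w' with
  | nil => simp only [append, cplus, Nat.add_zero]
  | fwd w' e ih => simp only [append, cplus, ih, Nat.add_assoc]
  | bwd w' e ih => simp only [append, cplus, ih]

end DWalk

section

variable {V : Type} {H : V → V → Type}

theorem ell_eq_zero_of_cplus_eq_zero {i j : V} (w : DWalk H i j) (hw : w.cplus = 0) :
    ell H i j = 0 :=
  Nat.eq_zero_of_le_zero (Nat.sInf_le ⟨w, hw⟩)

theorem QPath.exists_pos_length_of_transGen {a b : V}
    (h : Relation.TransGen (fun x y => Nonempty (H x y)) a b) :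
    ∃ p : QPath H a b, 0 < p.length := by
  induction h with
  | single hab =>
    obtain ⟨e⟩ := hab
    exact ⟨.cons (.nil _) e, by simp only [QPath.length]; omega⟩
  | tail _ hbc ih =>
    obtain ⟨e⟩ := hbc
    obtain ⟨p, -⟩ := ih
    exact ⟨.cons p e, by simp only [QPath.length]; omega⟩

theorem QuiverAcyclic.wellFounded [Finite V] (hacyc : QuiverAcyclic H) :
    WellFounded (fun x y => Nonempty (H x y)) := by
  have : Std.Irrefl (Relation.TransGen fun x y : V => Nonempty (H x y)) :=
    ⟨fun a h => by
      obtain ⟨p, hp⟩ := QPath.exists_pos_length_of_transGen h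
      exact hp.ne' (hacyc a p)⟩
  exact Subrelation.wf (fun h => Relation.TransGen.single h)
    (Finite.wellFounded_of_trans_of_irrefl (Relation.TransGen fun x y : V => Nonempty (H x y)))

theorem ell_to_source_eq_zero [Finite V] (hacyc : QuiverAcyclic H) {s : V}
    (hs : UniqueSource H s) (i : V) : ell H i s = 0 := by
  suffices ∀ x, ∃ w : DWalk H x s, w.cplus = 0 by
    obtain ⟨w, hw⟩ := this i
    exact ell_eq_zero_of_cplus_eq_zero w hw
  intro x
  induction x using hacyc.wellFounded.induction with
  | _ x ih =>
    by_cases hxs : x = s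
    · subst hxs
      exact ⟨.nil _, DWalk.cplus.eq_1 _⟩
    · obtain ⟨y, ⟨e⟩⟩ : ∃ y, Nonempty (H y x) := by
        by_contra! h
        exact hxs (hs.2 x h)
      obtain ⟨w, hw⟩ := ih y ⟨e⟩
      exact ⟨(DWalk.bwd (.nil x) e).append w, by simp only [DWalk.cplus_append, DWalk.cplus, hw]⟩

theorem LSet.add_const_mem {r : V → ℕ} (hr : r ∈ LSet H) (t : ℕ) :
    (fun i => r i + t) ∈ LSet H := fun i j =>
  show r j + t ≤ r i + t + ell H i j by have := hr i j; omega

theorem LSet.sub_const_mem {r : V → ℕ} (hr : r ∈ LSet H) {t : ℕ} (ht : ∀ i, t ≤ r i) :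
    (fun i => r i - t) ∈ LSet H := fun i j =>
  show r j - t ≤ r i - t + ell H i j by have := hr i j; have := ht i; omega

theorem LSet.apply_source_le [Finite V] (hacyc : QuiverAcyclic H) {s : V}
    (hs : UniqueSource H s) {r : V → ℕ} (hr : r ∈ LSet H) (i : V) : r s ≤ r i := by
  simpa [ell_to_source_eq_zero hacyc hs i] using hr i s

end

theorem shift_iso_lk_general {V : Type} [Fintype V]
    (H : V → V → Type)
    (hacyc : QuiverAcyclic H)
    (s : V) (hs : UniqueSource H s) (t : ℕ) :
    (∀ r ∈ LSet H, r s = 0 →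
        (fun i => r i + t) ∈ LSet H ∧ (fun i => r i + t) s = t) ∧
    (∀ r' ∈ LSet H, r' s = t →
        ∃ r ∈ LSet H, r s = 0 ∧ r' = fun i => r i + t) ∧
    (∀ r q : V → ℕ, (∀ i, r i ≤ q i) ↔ ∀ i, r i + t ≤ q i + t) := by
  refine ⟨fun r hr hrs => ⟨LSet.add_const_mem hr t, by simp [hrs]⟩, fun r' hr' hr's => ?_,
    fun r q => forall_congr' fun i => (Nat.add_le_add_iff_right).symm⟩
  have ht : ∀ i, t ≤ r' i := fun i => hr's ▸ LSet.apply_source_le hacyc hs hr' i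
  refine ⟨fun i => r' i - t, LSet.sub_const_mem hr' ht, by simp [hr's], ?_⟩
  funext i
  exact (Nat.sub_add_cancel (ht i)).symm

/-- Assume the finite connected acyclic quiver `Q` has a
unique source `s` and satisfies condition (b).  Then `τ^{-t}` induces a
bijection (indeed a quiver isomorphism) `lk_p(P(s)) ≅ lk_p(τ^{-t}P(s))`;
combinatorially, the shift `(r_i) ↦ (r_i + t)` is an isomorphism of posets from
`{(r_i) ∈ L(Q) : r_s = 0}` onto `{(r_i) ∈ L(Q) : r_s = t}`. -/
theorem shift_iso_lk {V : Type} [Fintype V]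
    (H : V → V → Type) [∀ a b, Fintype (H a b)]
    (hacyc : QuiverAcyclic H) (hconn : QuiverConnected H) (hb : CondB H)
    (s : V) (hs : UniqueSource H s) (t : ℕ) :
    (∀ r ∈ LSet H, r s = 0 →
        (fun i => r i + t) ∈ LSet H ∧ (fun i => r i + t) s = t) ∧
    (∀ r' ∈ LSet H, r' s = t →
        ∃ r ∈ LSet H, r s = 0 ∧ r' = fun i => r i + t) ∧
    (∀ r q : V → ℕ, (∀ i, r i ≤ q i) ↔ ∀ i, r i + t ≤ q i + t) :=
  shift_iso_lk_general H hacyc s hs t
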